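/- arXiv:2410.20153 — 5 statements merged into one kernel-verified Lean document; each statement's English description precedes it below -/
import Mathlib

section
/- Let ν ∈ (0,1] and φ(x) = ‖x‖^{ν+1}/(ν+1) on ℝ^m. Then the gradient map ∇φ(x) = ‖x‖^{ν-1} x (with ∇φ(0)=0) is Hölder continuous of order ν with constant 2^{1-ν}: for all x, x' ∈ ℝ^m, ‖∇φ(x') − ∇φ(x)‖ ≤ 2^{1-ν} ‖x' − x‖^ν. -/
/-!
Square both sides. With `R = ‖x'‖`, `r = ‖x‖` and `u = ‖x' - x‖²`, the square of the left-hand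
side is an affine function of `u`, while the square of the right-hand side, `4^{1-ν} u^ν`, is
concave in `u`. Since `u` ranges over `[(R - r)², (R + r)²]`, it suffices to compare them at the
two endpoints, where the inequality becomes `|R^ν - r^ν| ≤ |R - r|^ν` (subadditivity of `t ↦ t^ν`)
and `R^ν + r^ν ≤ 2^{1-ν} (R + r)^ν` (concavity of `t ↦ t^ν` at the midpoint).
-/

open Set

namespace Real

/-- Also true at `r = 0`, where `0 ^ (ν - 1)` is a junk value; so the zero vector needs no
separate treatment below. -/
lemma rpow_sub_one_mul_self {r ν : ℝ} (hr : 0 ≤ r) (hν : 0 < ν) : r ^ (ν - 1) * r = r ^ ν := by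
  rcases hr.eq_or_lt with rfl | hr
  · simp [zero_rpow hν.ne']
  · rw [← rpow_add_one hr.ne', sub_add_cancel]

lemma abs_rpow_sub_rpow_le {a b p : ℝ} (ha : 0 ≤ a) (hb : 0 ≤ b) (hp : 0 ≤ p) (hp1 : p ≤ 1) :
    |a ^ p - b ^ p| ≤ |a - b| ^ p := by
  wlog hba : b ≤ a generalizing a b
  · rw [abs_sub_comm, abs_sub_comm a]
    exact this hb ha (le_of_not_ge hba)
  have hsub : a ^ p ≤ (a - b) ^ p + b ^ p := by
    simpa using rpow_add_le_add_rpow (sub_nonneg.2 hba) hb hp hp1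
  rw [abs_of_nonneg (sub_nonneg.2 (rpow_le_rpow hb hba hp)), abs_of_nonneg (sub_nonneg.2 hba)]
  linarith

lemma rpow_add_rpow_le_two_rpow_mul {a b p : ℝ} (ha : 0 ≤ a) (hb : 0 ≤ b) (hp : 0 ≤ p)
    (hp1 : p ≤ 1) : a ^ p + b ^ p ≤ 2 ^ (1 - p) * (a + b) ^ p := by
  have hmid := (concaveOn_rpow hp hp1).2 (mem_Ici.2 ha) (mem_Ici.2 hb)
    (by norm_num : (0 : ℝ) ≤ 2⁻¹) (by norm_num : (0 : ℝ) ≤ 2⁻¹) (by norm_num)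
  simp only [smul_eq_mul, ← mul_add] at hmid
  rw [mul_rpow (by norm_num) (by positivity), inv_rpow zero_le_two] at hmid
  rw [rpow_sub zero_lt_two, rpow_one, div_mul_eq_mul_div, le_div_iff₀ (by positivity)]
  field_simp at hmid
  linarith

end Real

lemma ConcaveOn.affine_le_of_mem_Icc {s : Set ℝ} {f : ℝ → ℝ} (hf : ConcaveOn ℝ s f)
    {x y z : ℝ} (hx : x ∈ s) (hy : y ∈ s) (hz : z ∈ Icc x y) {c d : ℝ}
    (hfx : c + d * x ≤ f x) (hfy : c + d * y ≤ f y) : c + d * z ≤ f z := by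
  obtain ⟨a, b, ha, hb, hab, rfl⟩ := (Convex.mem_Icc (hz.1.trans hz.2)).1 hz
  calc c + d * (a * x + b * y) = a * (c + d * x) + b * (c + d * y) := by
        linear_combination c * hab.symm
    _ ≤ a * f x + b * f y := by gcongr
    _ ≤ f (a * x + b * y) := hf.2 hx hy ha hb hab

lemma rpow_sq_add_rpow_sq_sub_le {ν R r u : ℝ} (hν : 0 < ν) (hν1 : ν ≤ 1) (hR : 0 ≤ R)
    (hr : 0 ≤ r) (hu : u ∈ Icc ((R - r) ^ 2) ((R + r) ^ 2)) :
    (R ^ ν) ^ 2 + (r ^ ν) ^ 2 - R ^ (ν - 1) * r ^ (ν - 1) * (R ^ 2 + r ^ 2 - u)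
      ≤ (2 ^ (1 - ν)) ^ 2 * u ^ ν := by
  have hB : R ^ (ν - 1) * r ^ (ν - 1) * (R * r) = R ^ ν * r ^ ν := by
    rw [← Real.rpow_sub_one_mul_self hR hν, ← Real.rpow_sub_one_mul_self hr hν]; ring
  have hC : 1 ≤ ((2 : ℝ) ^ (1 - ν)) ^ 2 :=
    one_le_pow₀ (Real.one_le_rpow one_le_two (by linarith))
  have hconc : ConcaveOn ℝ (Ici 0) fun t : ℝ ↦ ((2 : ℝ) ^ (1 - ν)) ^ 2 * t ^ ν :=
    (Real.concaveOn_rpow hν.le hν1).smul (by positivity)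
  have hlo : (R ^ ν - r ^ ν) ^ 2 ≤ ((2 : ℝ) ^ (1 - ν)) ^ 2 * ((R - r) ^ 2) ^ ν := by
    rw [← sq_abs (R - r), ← Real.rpow_pow_comm (abs_nonneg _), ← sq_abs (R ^ ν - r ^ ν)]
    calc |R ^ ν - r ^ ν| ^ 2 ≤ (|R - r| ^ ν) ^ 2 := by
          gcongr; exact Real.abs_rpow_sub_rpow_le hR hr hν.le hν1
      _ ≤ _ := le_mul_of_one_le_left (by positivity) hC
  have hhi : (R ^ ν + r ^ ν) ^ 2 ≤ ((2 : ℝ) ^ (1 - ν)) ^ 2 * ((R + r) ^ 2) ^ ν := by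
    rw [← Real.rpow_pow_comm (by positivity), ← mul_pow]
    gcongr
    exact Real.rpow_add_rpow_le_two_rpow_mul hR hr hν.le hν1
  have key := hconc.affine_le_of_mem_Icc (mem_Ici.2 (sq_nonneg _)) (mem_Ici.2 (sq_nonneg _)) hu
    (c := (R ^ ν) ^ 2 + (r ^ ν) ^ 2 - R ^ (ν - 1) * r ^ (ν - 1) * (R ^ 2 + r ^ 2))
    (d := R ^ (ν - 1) * r ^ (ν - 1))
    (by linear_combination hlo - 2 * hB) (by linear_combination hhi + 2 * hB)
  linear_combination key

lemma norm_smul_sub_smul_sq {E : Type*} [NormedAddCommGroup E] [InnerProductSpace ℝ E]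
    (a b : ℝ) (x y : E) :
    ‖a • x - b • y‖ ^ 2
      = (a * ‖x‖) ^ 2 + (b * ‖y‖) ^ 2 - a * b * (‖x‖ ^ 2 + ‖y‖ ^ 2 - ‖x - y‖ ^ 2) := by
  rw [norm_sub_sq_real, norm_sub_sq_real x y, real_inner_smul_left, real_inner_smul_right,
    norm_smul, norm_smul, Real.norm_eq_abs, Real.norm_eq_abs, mul_pow, mul_pow, mul_pow, mul_pow,
    sq_abs, sq_abs]
  ring

theorem norm_rpow_smul_sub_rpow_smul_le {E : Type*} [NormedAddCommGroup E]
    [InnerProductSpace ℝ E] {ν : ℝ} (hν : 0 < ν) (hν1 : ν ≤ 1) (x x' : E) :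
    ‖(‖x'‖ ^ (ν - 1)) • x' - (‖x‖ ^ (ν - 1)) • x‖ ≤ 2 ^ (1 - ν) * ‖x' - x‖ ^ ν := by
  have hu : ‖x' - x‖ ^ 2 ∈ Icc ((‖x'‖ - ‖x‖) ^ 2) ((‖x'‖ + ‖x‖) ^ 2) :=
    ⟨sq_le_sq.2 ((abs_norm_sub_norm_le x' x).trans_eq (abs_norm _).symm),
      pow_le_pow_left₀ (norm_nonneg _) (norm_sub_le x' x) 2⟩
  refine (pow_le_pow_iff_left₀ (norm_nonneg _) (by positivity) two_ne_zero).1 ?_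
  rw [norm_smul_sub_smul_sq, Real.rpow_sub_one_mul_self (norm_nonneg _) hν,
    Real.rpow_sub_one_mul_self (norm_nonneg _) hν, mul_pow,
    Real.rpow_pow_comm (norm_nonneg (x' - x))]
  exact rpow_sq_add_rpow_sq_sub_le hν hν1 (norm_nonneg _) (norm_nonneg _) hu

/-- For `ν ∈ (0,1]`, the gradient map `x ↦ ‖x‖^{ν-1} • x` of `φ(x) = ‖x‖^{ν+1}/(ν+1)`
(with value `0` at `0`) is Hölder continuous of order `ν` with constant `2^{1-ν}`. -/
theorem stmt_2 (m : ℕ) (ν : ℝ) (hν : ν ∈ Set.Ioc (0 : ℝ) 1) :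
    ∀ x x' : EuclideanSpace ℝ (Fin m),
      ‖(‖x'‖ ^ (ν - 1)) • x' - (‖x‖ ^ (ν - 1)) • x‖ ≤ 2 ^ (1 - ν) * ‖x' - x‖ ^ ν :=
  norm_rpow_smul_sub_rpow_smul_le hν.1 hν.2
end

section
/- Let φ : ℝ^m → ℝ be convex and differentiable, A : ℝ^n → ℝ^m be continuously differentiable with L_A-Lipschitz Jacobian, X ⊆ ℝ^n a set on which ‖∇φ(A(x))‖ ≤ M for all x ∈ X, and β > 0. Then for all x, x' ∈ X: β·φ(A(x)) ≥ β·φ(A(x')) + β⟨J_A(x')ᵀ ∇φ(A(x')), x − x'⟩ − (β L_A M/2)‖x − x'‖². -/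
/-!
Convexity of `φ` gives `φ (A x) ≥ φ (A x') + ⟪∇φ (A x'), A x - A x'⟫`. Replacing `A x - A x'` by
its linearization `J x' (x - x')` costs the Taylor remainder, whose norm is at most
`L_A / 2 * ‖x - x'‖²` because the Jacobian is Lipschitz; by Cauchy–Schwarz and `‖∇φ (A x')‖ ≤ M`
the inner product with the remainder is then at least `-(L_A M / 2) ‖x - x'‖²`.
-/

open scoped RealInnerProductSpace

open Set AffineMap

theorem ConvexOn.add_fderiv_sub_le {E : Type*} [NormedAddCommGroup E] [NormedSpace ℝ E]
    {s : Set E} {f : E → ℝ} {f' : E →L[ℝ] ℝ} {a b : E} (hf : ConvexOn ℝ s f)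
    (ha : a ∈ s) (hb : b ∈ s) (hfa : HasFDerivAt f f' a) :
    f a + f' (b - a) ≤ f b := by
  let ℓ : ℝ →ᵃ[ℝ] E := lineMap a b
  have hline : ConvexOn ℝ (ℓ ⁻¹' s) (f ∘ ℓ) := hf.comp_affineMap ℓ
  have hderiv : HasDerivAt (f ∘ ℓ) (f' (b - a)) 0 :=
    (by simpa [ℓ] using hfa : HasFDerivAt f f' (ℓ 0)).comp_hasDerivAt 0
      hasDerivAt_lineMap
  have hslope := hline.le_slope_of_hasDerivAt (by simpa [ℓ]) (by simpa [ℓ]) one_pos hderiv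
  simp only [slope, Function.comp_apply, ℓ, lineMap_apply_zero, lineMap_apply_one, sub_zero,
    inv_one, vsub_eq_sub, smul_eq_mul, one_mul] at hslope
  linarith

theorem ConvexOn.add_inner_sub_le_of_hasGradientAt {F : Type*} [NormedAddCommGroup F]
    [InnerProductSpace ℝ F] [CompleteSpace F] {s : Set F} {f : F → ℝ} {g a b : F}
    (hf : ConvexOn ℝ s f) (ha : a ∈ s) (hb : b ∈ s) (hfa : HasGradientAt f g a) :
    f a + ⟪g, b - a⟫ ≤ f b := by
  simpa using hf.add_fderiv_sub_le ha hb hfa.hasFDerivAt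

theorem norm_sub_sub_fderiv_le_of_lipschitz {E F : Type*} [NormedAddCommGroup E]
    [NormedSpace ℝ E] [NormedAddCommGroup F] [NormedSpace ℝ F] {A : E → F} {J : E → E →L[ℝ] F}
    {L : ℝ} {x : E} (hA : ∀ z, HasFDerivAt A (J z) z) (hJ : ∀ z, ‖J z - J x‖ ≤ L * ‖z - x‖)
    (y : E) : ‖A y - A x - J x (y - x)‖ ≤ L / 2 * ‖y - x‖ ^ 2 := by
  set v := y - x
  set r : ℝ → F := fun t => A (x + t • v) - A x - t • J x v
  have hr : ∀ t, HasDerivAt r (J (x + t • v) v - J x v) t := by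
    intro t
    have hline : HasDerivAt (fun t : ℝ => x + t • v) v t := by
      simpa using ((hasDerivAt_id t).smul_const v).const_add x
    have := (hA (x + t • v)).comp_hasDerivAt t hline
    exact ((this.sub_const (A x)).sub ((hasDerivAt_id' t).smul_const (J x v))).congr_deriv
      (by rw [one_smul])
  have hbound : ∀ t ∈ Ico (0 : ℝ) 1, ‖J (x + t • v) v - J x v‖ ≤ L * ‖v‖ ^ 2 * t := by
    intro t ht
    calc ‖J (x + t • v) v - J x v‖ ≤ ‖J (x + t • v) - J x‖ * ‖v‖ :=
          (J (x + t • v) - J x).le_opNorm v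
      _ ≤ L * ‖t • v‖ * ‖v‖ := by
          gcongr
          simpa using hJ (x + t • v)
      _ = L * ‖v‖ ^ 2 * t := by
          rw [norm_smul, Real.norm_of_nonneg ht.1]; ring
  have hB : ∀ t, HasDerivAt (fun t : ℝ => L / 2 * ‖v‖ ^ 2 * t ^ 2) (L * ‖v‖ ^ 2 * t) t := by
    intro t
    exact ((hasDerivAt_pow 2 t).const_mul (L / 2 * ‖v‖ ^ 2)).congr_deriv (by push_cast; ring)
  have := image_norm_le_of_norm_deriv_right_le_deriv_boundary
    (fun t _ => (hr t).continuousAt.continuousWithinAt) (fun t _ => (hr t).hasDerivWithinAt)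
    (by simp [r]) hB hbound (right_mem_Icc.2 zero_le_one)
  simpa [r, v] using this

theorem stmt_10_general (n m : ℕ)
    (φ : EuclideanSpace ℝ (Fin m) → ℝ) (gφ : EuclideanSpace ℝ (Fin m) → EuclideanSpace ℝ (Fin m))
    (A : EuclideanSpace ℝ (Fin n) → EuclideanSpace ℝ (Fin m))
    (J : EuclideanSpace ℝ (Fin n) → (EuclideanSpace ℝ (Fin n) →L[ℝ] EuclideanSpace ℝ (Fin m)))
    (X : Set (EuclideanSpace ℝ (Fin n))) (LA M β : ℝ) (hβ : 0 < β)
    (hconv : ConvexOn ℝ Set.univ φ)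
    (hφgrad : ∀ z, HasGradientAt φ (gφ z) z)
    (hderiv : ∀ x, HasFDerivAt A (J x) x)
    (hlip : ∀ x x', ‖J x - J x'‖ ≤ LA * ‖x - x'‖)
    (hM : ∀ x ∈ X, ‖gφ (A x)‖ ≤ M) :
    ∀ x ∈ X, ∀ x' ∈ X,
      β * φ (A x) ≥ β * φ (A x') + β * ⟪gφ (A x'), (J x') (x - x')⟫
        - (β * LA * M / 2) * ‖x - x'‖ ^ 2 := by
  intro x _ x' hx'
  set R := A x - A x' - J x' (x - x') with hR
  have hconvex : φ (A x') + ⟪gφ (A x'), A x - A x'⟫ ≤ φ (A x) :=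
    hconv.add_inner_sub_le_of_hasGradientAt trivial trivial (hφgrad (A x'))
  have hsplit : ⟪gφ (A x'), A x - A x'⟫ = ⟪gφ (A x'), J x' (x - x')⟫ + ⟪gφ (A x'), R⟫ := by
    rw [← inner_add_right, hR, add_sub_cancel]
  have htaylor : ‖R‖ ≤ LA / 2 * ‖x - x'‖ ^ 2 :=
    norm_sub_sub_fderiv_le_of_lipschitz hderiv (fun z => hlip z x') x
  have hremainder : -(M * (LA / 2 * ‖x - x'‖ ^ 2)) ≤ ⟪gφ (A x'), R⟫ :=
    neg_le_of_abs_le <| (abs_real_inner_le_norm _ _).trans <|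
      mul_le_mul (hM x' hx') htaylor (norm_nonneg _) ((norm_nonneg _).trans (hM x' hx'))
  have hbound : φ (A x') + ⟪gφ (A x'), J x' (x - x')⟫ - LA * M / 2 * ‖x - x'‖ ^ 2 ≤ φ (A x) := by
    linarith
  have := mul_le_mul_of_nonneg_left hbound hβ.le
  linarith

/-- Let `φ : ℝ^m → ℝ` be convex and differentiable, `A : ℝ^n → ℝ^m` continuously differentiable
with `L_A`-Lipschitz Jacobian, `X` a set with `‖∇φ(A x)‖ ≤ M` on `X`, and `β > 0`. Then for all
`x, x' ∈ X`:
`β φ(A x) ≥ β φ(A x') + β ⟪J_A(x')ᵀ ∇φ(A x'), x - x'⟫ - (β L_A M / 2)‖x - x'‖²`. -/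
theorem stmt_10 (n m : ℕ)
    (φ : EuclideanSpace ℝ (Fin m) → ℝ) (gφ : EuclideanSpace ℝ (Fin m) → EuclideanSpace ℝ (Fin m))
    (A : EuclideanSpace ℝ (Fin n) → EuclideanSpace ℝ (Fin m))
    (J : EuclideanSpace ℝ (Fin n) → (EuclideanSpace ℝ (Fin n) →L[ℝ] EuclideanSpace ℝ (Fin m)))
    (X : Set (EuclideanSpace ℝ (Fin n))) (LA M β : ℝ) (hβ : 0 < β)
    (hconv : ConvexOn ℝ Set.univ φ)
    (hφgrad : ∀ z, HasGradientAt φ (gφ z) z)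
    (hderiv : ∀ x, HasFDerivAt A (J x) x) (hJcont : Continuous J)
    (hlip : ∀ x x', ‖J x - J x'‖ ≤ LA * ‖x - x'‖)
    (hM : ∀ x ∈ X, ‖gφ (A x)‖ ≤ M) :
    ∀ x ∈ X, ∀ x' ∈ X,
      β * φ (A x) ≥ β * φ (A x') + β * ⟪gφ (A x'), (J x') (x - x')⟫
        - (β * LA * M / 2) * ‖x - x'‖ ^ 2 :=
  stmt_10_general n m φ gφ A J X LA M β hβ hconv hφgrad hderiv hlip hM
end

section
/- Let F : ℝ^n → ℝ be differentiable with (H_F, ν)-Hölder continuous gradient on a closed convex set X, ν ∈ (0,1], and let ε > 0, γ = (1/H_F)·ε^{(1−ν)/(1+ν)}. Fix x ∈ X and let x⁺ = argmin_{u ∈ X} ⟨∇F(x), u − x⟩ + (1/(2γ))‖u − x‖². Then (1/(2γ))‖x⁺ − x‖² ≤ F(x) − F(x⁺) + (H_F/2)ε. -/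
/-!
Three estimates combine. Optimality of `x⁺` for the strongly convex model, tested against the
points `x⁺ + s (x - x⁺)` with `s → 0⁺`, gives `⟪∇F(x), x⁺ - x⟫ + (1/γ)‖x⁺ - x‖² ≤ 0`. The Hölder
descent inequality bounds `F(x⁺)` by `F(x) + ⟪∇F(x), x⁺ - x⟫ + H_F/(1+ν) ‖x⁺ - x‖^{1+ν}`. Weighted
AM-GM with weights `(1+ν)/2` and `(1-ν)/2` splits `‖x⁺ - x‖^{1+ν}` into a multiple of
`‖x⁺ - x‖²` and of `ε`; the choice of `γ` makes the first of these exactly `(1/(2γ))‖x⁺ - x‖²`.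
-/

open scoped RealInnerProductSpace

open Set Filter Topology

section

variable {E : Type*} [NormedAddCommGroup E] [InnerProductSpace ℝ E]

theorem inner_add_two_mul_norm_sq_nonpos_of_forall_le {X : Set E} (hX : Convex ℝ X)
    {a x p : E} {c : ℝ} (hx : x ∈ X) (hp : p ∈ X)
    (hmin : ∀ u ∈ X, ⟪a, p - x⟫ + c * ‖p - x‖ ^ 2 ≤ ⟪a, u - x⟫ + c * ‖u - x‖ ^ 2) :
    ⟪a, p - x⟫ + 2 * c * ‖p - x‖ ^ 2 ≤ 0 := by
  have hbound : ∀ s ∈ Ioc (0 : ℝ) 1,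
      ⟪a, p - x⟫ + 2 * c * ‖p - x‖ ^ 2 ≤ c * ‖p - x‖ ^ 2 * s := by
    rintro s ⟨hs0, hs1⟩
    have hu : x + (1 - s) • (p - x) ∈ X := by
      convert hX hp hx (sub_nonneg.2 hs1) hs0.le (by ring) using 1
      module
    have h := hmin _ hu
    rw [add_sub_cancel_left, inner_smul_right, norm_smul, Real.norm_eq_abs,
      abs_of_nonneg (sub_nonneg.2 hs1), mul_pow] at h
    have hs : s * (⟪a, p - x⟫ + 2 * c * ‖p - x‖ ^ 2 - c * ‖p - x‖ ^ 2 * s) ≤ 0 := by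
      linear_combination h
    linarith [nonpos_of_mul_nonpos_right hs hs0]
  have hlim : Tendsto (fun s : ℝ => c * ‖p - x‖ ^ 2 * s) (𝓝[>] 0) (𝓝 0) := by
    simpa using ((continuous_const_mul (c * ‖p - x‖ ^ 2)).tendsto 0).mono_left nhdsWithin_le_nhds
  exact ge_of_tendsto hlim (eventually_of_mem (Ioc_mem_nhdsGT one_pos) hbound)

theorem HasGradientAt.hasDerivAt_comp_add_smul [CompleteSpace E] {F : E → ℝ} {g x v : E} {t : ℝ}
    (h : HasGradientAt F g (x + t • v)) :
    HasDerivAt (fun s : ℝ => F (x + s • v)) ⟪g, v⟫ t := by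
  have hline : HasDerivAt (fun s : ℝ => x + s • v) v t := by
    simpa using ((hasDerivAt_id t).smul_const v).const_add x
  simpa [Function.comp_def] using h.hasFDerivAt.comp_hasDerivAt t hline

theorem le_add_inner_add_rpow_of_hoelder [CompleteSpace E] {F : E → ℝ} {g : E → E} {H ν : ℝ}
    (hν : 0 ≤ ν) {x y : E}
    (hgrad : ∀ z ∈ segment ℝ x y, HasGradientAt F (g z) z)
    (hhold : ∀ z ∈ segment ℝ x y, ‖g z - g x‖ ≤ H * ‖z - x‖ ^ ν) :
    F y ≤ F x + ⟪g x, y - x⟫ + H / (1 + ν) * ‖y - x‖ ^ (1 + ν) := by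
  set v := y - x
  set r := ‖v‖
  have hseg : ∀ t ∈ Icc (0 : ℝ) 1, x + t • v ∈ segment ℝ x y := by
    rw [segment_eq_image']
    exact fun t ht => mem_image_of_mem _ ht
  set ψ : ℝ → ℝ := fun t => F (x + t • v) - t * ⟪g x, v⟫ - H / (1 + ν) * r ^ (1 + ν) * t ^ (1 + ν)
  have hψ : ∀ t ∈ Icc (0 : ℝ) 1,
      HasDerivAt ψ (⟪g (x + t • v), v⟫ - ⟪g x, v⟫ - H * r ^ (1 + ν) * t ^ ν) t := by
    intro t ht
    have hpow : HasDerivAt (fun s : ℝ => s ^ (1 + ν)) ((1 + ν) * t ^ ν) t := by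
      simpa using Real.hasDerivAt_rpow_const (x := t) (p := 1 + ν) (Or.inr (by linarith))
    refine (((hgrad _ (hseg t ht)).hasDerivAt_comp_add_smul.sub
      ((hasDerivAt_id' t).mul_const ⟪g x, v⟫)).sub
        (hpow.const_mul (H / (1 + ν) * r ^ (1 + ν)))).congr_deriv ?_
    field_simp
  have hslope : ∀ t ∈ Ioo (0 : ℝ) 1, ⟪g (x + t • v), v⟫ - ⟪g x, v⟫ ≤ H * r ^ (1 + ν) * t ^ ν := by
    intro t ht
    calc ⟪g (x + t • v), v⟫ - ⟪g x, v⟫ = ⟪g (x + t • v) - g x, v⟫ := (inner_sub_left ..).symm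
      _ ≤ ‖g (x + t • v) - g x‖ * r := real_inner_le_norm _ _
      _ ≤ H * ‖x + t • v - x‖ ^ ν * r := by
          gcongr
          exact hhold _ (hseg t (Ioo_subset_Icc_self ht))
      _ = H * r ^ (1 + ν) * t ^ ν := by
          rw [add_sub_cancel_left, norm_smul, Real.norm_eq_abs, abs_of_pos ht.1,
            Real.mul_rpow ht.1.le (norm_nonneg v), Real.rpow_one_add' (norm_nonneg v) (by linarith)]
          ring
  have hanti : AntitoneOn ψ (Icc 0 1) := by
    refine antitoneOn_of_deriv_nonpos (convex_Icc 0 1)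
      (fun t ht => (hψ t ht).continuousAt.continuousWithinAt) ?_ ?_ <;>
    rw [interior_Icc] <;> intro t ht
    · exact (hψ t (Ioo_subset_Icc_self ht)).differentiableAt.differentiableWithinAt
    · rw [(hψ t (Ioo_subset_Icc_self ht)).deriv]
      linarith [hslope t ht]
  have h01 := hanti (left_mem_Icc.2 zero_le_one) (right_mem_Icc.2 zero_le_one) zero_le_one
  simp only [ψ, zero_smul, add_zero, Real.zero_rpow (by linarith : (1 : ℝ) + ν ≠ 0),
    Real.one_rpow, one_smul, add_sub_cancel, v] at h01
  linarith

end

theorem Real.rpow_one_add_le_weighted_sum {ν r ε : ℝ} (hν : ν ∈ Ioc (-1 : ℝ) 1) (hr : 0 ≤ r)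
    (hε : 0 < ε) :
    r ^ (1 + ν) ≤ (1 + ν) / 2 * (r ^ 2 / ε ^ ((1 - ν) / (1 + ν))) + (1 - ν) / 2 * ε := by
  obtain ⟨hν₀, hν₁⟩ := hν
  have hpos : 0 < 1 + ν := by linarith
  have hamgm := Real.geom_mean_le_arith_mean2_weighted (w₁ := (1 + ν) / 2) (w₂ := (1 - ν) / 2)
    (p₁ := r ^ 2 / ε ^ ((1 - ν) / (1 + ν))) (p₂ := ε) (by linarith) (by linarith)
    (by positivity) hε.le (by ring)
  have hsq : (r ^ 2) ^ ((1 + ν) / 2) = r ^ (1 + ν) := by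
    rw [← Real.rpow_natCast, ← Real.rpow_mul hr]
    congr 1
    push_cast
    ring
  have hε' : (ε ^ ((1 - ν) / (1 + ν))) ^ ((1 + ν) / 2) = ε ^ ((1 - ν) / 2) := by
    rw [← Real.rpow_mul hε.le]
    congr 1
    field_simp
  rwa [Real.div_rpow (by positivity) (by positivity), hsq, hε',
    div_mul_cancel₀ _ (Real.rpow_pos_of_pos hε _).ne'] at hamgm

theorem mul_rpow_one_add_le_young {H ν r ε : ℝ} (hH : 0 ≤ H) (hν : ν ∈ Icc (0 : ℝ) 1)
    (hr : 0 ≤ r) (hε : 0 < ε) :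
    H / (1 + ν) * r ^ (1 + ν) ≤ H / (2 * ε ^ ((1 - ν) / (1 + ν))) * r ^ 2 + H / 2 * ε := by
  obtain ⟨hν₀, hν₁⟩ := hν
  have hpos : 0 < 1 + ν := by linarith
  have hE : 0 < ε ^ ((1 - ν) / (1 + ν)) := Real.rpow_pos_of_pos hε _
  have hweight : H / (1 + ν) * ((1 - ν) / 2) ≤ H / 2 := by
    rw [div_mul_div_comm, div_le_div_iff₀ (by positivity) two_pos]
    nlinarith
  calc H / (1 + ν) * r ^ (1 + ν)
      ≤ H / (1 + ν) * ((1 + ν) / 2 * (r ^ 2 / ε ^ ((1 - ν) / (1 + ν))) + (1 - ν) / 2 * ε) := by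
        gcongr
        exact Real.rpow_one_add_le_weighted_sum ⟨by linarith, hν₁⟩ hr hε
    _ = H / (2 * ε ^ ((1 - ν) / (1 + ν))) * r ^ 2 + H / (1 + ν) * ((1 - ν) / 2) * ε := by
        field_simp
    _ ≤ H / (2 * ε ^ ((1 - ν) / (1 + ν))) * r ^ 2 + H / 2 * ε := by gcongr

theorem stmt_12_general (n : ℕ) (X : Set (EuclideanSpace ℝ (Fin n)))
    (hXc : Convex ℝ X)
    (F : EuclideanSpace ℝ (Fin n) → ℝ) (g : EuclideanSpace ℝ (Fin n) → EuclideanSpace ℝ (Fin n))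
    (HF ν ε : ℝ) (hHF : 0 < HF) (hν : ν ∈ Set.Ioc (0 : ℝ) 1) (hε : 0 < ε)
    (hgrad : ∀ x ∈ X, HasGradientAt F (g x) x)
    (hhold : ∀ x ∈ X, ∀ x' ∈ X, ‖g x' - g x‖ ≤ HF * ‖x' - x‖ ^ ν)
    (γ : ℝ) (hγ : γ = (1 / HF) * ε ^ ((1 - ν) / (1 + ν)))
    (x xp : EuclideanSpace ℝ (Fin n)) (hx : x ∈ X) (hxp : xp ∈ X)
    (hmin : ∀ u ∈ X,
      ⟪g x, xp - x⟫ + (1 / (2 * γ)) * ‖xp - x‖ ^ 2 ≤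
        ⟪g x, u - x⟫ + (1 / (2 * γ)) * ‖u - x‖ ^ 2) :
    (1 / (2 * γ)) * ‖xp - x‖ ^ 2 ≤ F x - F xp + (HF / 2) * ε := by
  have hseg := hXc.segment_subset hx hxp
  have hopt := inner_add_two_mul_norm_sq_nonpos_of_forall_le hXc hx hxp hmin
  have hdescent := le_add_inner_add_rpow_of_hoelder hν.1.le (fun z hz => hgrad z (hseg hz))
    (fun z hz => hhold x hx z (hseg hz))
  have hyoung := mul_rpow_one_add_le_young hHF.le (Ioc_subset_Icc_self hν)
    (norm_nonneg (xp - x)) hε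
  have hγ' : 1 / (2 * γ) = HF / (2 * ε ^ ((1 - ν) / (1 + ν))) := by
    rw [hγ]
    field_simp
  rw [← hγ'] at hyoung
  linarith

/-- Descent-type inequality for the projected-gradient step under `(H_F, ν)`-Hölder smoothness:
with `γ = (1/H_F) ε^{(1-ν)/(1+ν)}` and `x⁺` the minimizer over `X` of the proximal model at `x`,
`(1/(2γ))‖x⁺ - x‖² ≤ F(x) - F(x⁺) + (H_F/2) ε`. -/
theorem stmt_12 (n : ℕ) (X : Set (EuclideanSpace ℝ (Fin n)))
    (hXc : Convex ℝ X) (hXcl : IsClosed X)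
    (F : EuclideanSpace ℝ (Fin n) → ℝ) (g : EuclideanSpace ℝ (Fin n) → EuclideanSpace ℝ (Fin n))
    (HF ν ε : ℝ) (hHF : 0 < HF) (hν : ν ∈ Set.Ioc (0 : ℝ) 1) (hε : 0 < ε)
    (hgrad : ∀ x ∈ X, HasGradientAt F (g x) x)
    (hhold : ∀ x ∈ X, ∀ x' ∈ X, ‖g x' - g x‖ ≤ HF * ‖x' - x‖ ^ ν)
    (γ : ℝ) (hγ : γ = (1 / HF) * ε ^ ((1 - ν) / (1 + ν)))
    (x xp : EuclideanSpace ℝ (Fin n)) (hx : x ∈ X) (hxp : xp ∈ X)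
    (hmin : ∀ u ∈ X,
      ⟪g x, xp - x⟫ + (1 / (2 * γ)) * ‖xp - x‖ ^ 2 ≤
        ⟪g x, u - x⟫ + (1 / (2 * γ)) * ‖u - x‖ ^ 2) :
    (1 / (2 * γ)) * ‖xp - x‖ ^ 2 ≤ F x - F xp + (HF / 2) * ε :=
  stmt_12_general n X hXc F g HF ν ε hHF hν hε hgrad hhold γ hγ x xp hx hxp hmin
end

section
/- Let F : ℝ^n → ℝ be differentiable with (H_F, ν)-Hölder continuous gradient on closed convex X, ν ∈ (0,1], x* = argmin_{u∈X} F(u), and suppose x ∈ X satisfies F(x) − F(x*) ≤ ε for some ε > 0. With γ = (1/H_F)ε^{(1−ν)/(1+ν)} and x⁺ = argmin_{u∈X} ⟨∇F(x), u−x⟩ + (1/(2γ))‖u−x‖², it holds that dist(−∇F(x⁺), N_X(x⁺)) ≤ (H_F^{1−ν}(2H_F(1+H_F))^{ν/2} + (2H_F(1+H_F))^{1/2})·ε^{ν/(1+ν)}. -/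
/-!
The optimality condition of the proximal step puts `-∇F(x) - γ⁻¹ (x⁺ - x)` in `N_X(x⁺)`, so the
distance is at most `‖∇F(x⁺) - ∇F(x)‖ + γ⁻¹ r ≤ H r^ν + γ⁻¹ r` with `r = ‖x⁺ - x‖`. Testing the
same condition at `u = x` gives `⟪∇F(x), x⁺ - x⟫ ≤ -γ⁻¹ r²`; combined with the Hölder descent
lemma `F(x⁺) ≤ F(x) + ⟪∇F(x), x⁺ - x⟫ + H/(1+ν) r^(1+ν)` and `F(x*) ≤ F(x⁺)` this yields
`γ⁻¹ r² ≤ ε + H/(1+ν) r^(1+ν)`. In the variable `s = r / ε^(1/(1+ν))` this reads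
`H s² ≤ 1 + H/(1+ν) s^(1+ν)`, and Young's inequality `s^(1+ν) ≤ ((1+ν) s² + 1 - ν)/2` turns it
into `(H s)² ≤ 2H(1+H)`.
-/

open scoped RealInnerProductSpace

section InnerProductSpace

variable {E : Type*} [NormedAddCommGroup E] [InnerProductSpace ℝ E]

def normalCone (X : Set E) (x : E) : Set E := {v | ∀ y ∈ X, ⟪v, y - x⟫ ≤ 0}

theorem neg_add_inv_smul_sub_mem_normalCone {X : Set E} (hX : Convex ℝ X) {a x xp : E}
    {γ : ℝ} (hxp : xp ∈ X)
    (hmin : ∀ u ∈ X, ⟪a, xp - x⟫ + (1 / (2 * γ)) * ‖xp - x‖ ^ 2 ≤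
      ⟪a, u - x⟫ + (1 / (2 * γ)) * ‖u - x‖ ^ 2) :
    -(a + γ⁻¹ • (xp - x)) ∈ normalCone X xp := by
  intro u hu
  have hderiv : HasFDerivAt (fun u => ⟪a, u - x⟫ + (1 / (2 * γ)) * ‖u - x‖ ^ 2)
      (innerSL ℝ (a + γ⁻¹ • (xp - x))) xp := by
    have hsub : HasFDerivAt (fun u : E => u - x) (ContinuousLinearMap.id ℝ E) xp :=
      (hasFDerivAt_id xp).sub_const x
    refine (((innerSL ℝ a).hasFDerivAt.comp xp hsub).add
      (hsub.norm_sq.const_mul (1 / (2 * γ)))).congr_fderiv ?_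
    ext v
    simp only [ContinuousLinearMap.comp_id, add_apply, smul_apply, coe_innerSL_apply, map_add,
      map_smul, smul_eq_mul, nsmul_eq_mul, Nat.cast_ofNat]
    field_simp
  have := (isMinOn_iff.2 hmin).localize.hasFDerivWithinAt_nonneg hderiv.hasFDerivWithinAt
    (sub_mem_posTangentConeAt_of_segment_subset (hX.segment_subset hxp hu))
  rw [innerSL_apply_apply] at this
  rw [inner_neg_left]
  linarith

theorem infDist_neg_le_of_mem_normalCone {X : Set E} {a b x xp : E} {γ : ℝ} (hγ : 0 ≤ γ)
    (h : -(a + γ⁻¹ • (xp - x)) ∈ normalCone X xp) :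
    Metric.infDist (-b) (normalCone X xp) ≤ ‖b - a‖ + γ⁻¹ * ‖xp - x‖ :=
  calc Metric.infDist (-b) (normalCone X xp) ≤ ‖-b - -(a + γ⁻¹ • (xp - x))‖ :=
        (Metric.infDist_le_dist_of_mem h).trans_eq (dist_eq_norm _ _)
    _ ≤ ‖b - a‖ + γ⁻¹ * ‖xp - x‖ := by
      rw [neg_sub_neg, add_sub_right_comm, norm_sub_rev b]
      refine (norm_add_le _ _).trans_eq ?_
      rw [norm_smul, Real.norm_of_nonneg (inv_nonneg.2 hγ)]

end InnerProductSpace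

theorem le_add_fderiv_add_rpow_of_holder {E : Type*} [NormedAddCommGroup E] [NormedSpace ℝ E]
    {f : E → ℝ} {f' : E → E →L[ℝ] ℝ} {x y : E} {H ν : ℝ} (hν : 0 ≤ ν)
    (hf : ∀ z ∈ segment ℝ x y, HasFDerivAt f (f' z) z)
    (hf' : ∀ z ∈ segment ℝ x y, ‖f' z - f' x‖ ≤ H * ‖z - x‖ ^ ν) :
    f y ≤ f x + f' x (y - x) + H / (1 + ν) * ‖y - x‖ ^ (1 + ν) := by
  set d := y - x
  have hν' : 1 + ν ≠ 0 := by positivity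
  have hseg : ∀ t ∈ Set.Icc (0 : ℝ) 1, x + t • d ∈ segment ℝ x y := fun t ht =>
    segment_eq_image' ℝ x y ▸ ⟨t, ht, rfl⟩
  have hφ : ∀ t ∈ Set.Icc (0 : ℝ) 1,
      HasDerivAt (fun t => f (x + t • d)) (f' (x + t • d) d) t := fun t ht => by
    have := (hf _ (hseg t ht)).comp_hasDerivAt t (((hasDerivAt_id t).smul_const d).const_add x)
    rwa [one_smul] at this
  have hB : ∀ t, HasDerivAt
      (fun t => f x + t * f' x d + H / (1 + ν) * ‖d‖ ^ (1 + ν) * t ^ (1 + ν))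
      (f' x d + H * ‖d‖ ^ (1 + ν) * t ^ ν) t := fun t => by
    have := ((hasDerivAt_id t).mul_const (f' x d)).const_add (f x) |>.add
      ((Real.hasDerivAt_rpow_const (p := 1 + ν) (Or.inr (by linarith))).const_mul
        (H / (1 + ν) * ‖d‖ ^ (1 + ν)))
    refine this.congr_deriv ?_
    rw [add_sub_cancel_left]
    field_simp
  have hbound : ∀ t ∈ Set.Ico (0 : ℝ) 1,
      f' (x + t • d) d ≤ f' x d + H * ‖d‖ ^ (1 + ν) * t ^ ν := by
    intro t ht
    have hz := hseg t (Set.Ico_subset_Icc_self ht)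
    calc f' (x + t • d) d = f' x d + (f' (x + t • d) - f' x) d := by simp
      _ ≤ f' x d + ‖f' (x + t • d) - f' x‖ * ‖d‖ := by
        gcongr; exact (Real.le_norm_self _).trans ((f' (x + t • d) - f' x).le_opNorm d)
      _ ≤ f' x d + H * ‖x + t • d - x‖ ^ ν * ‖d‖ := by gcongr; exact hf' _ hz
      _ = f' x d + H * ‖d‖ ^ (1 + ν) * t ^ ν := by
        rw [add_sub_cancel_left, norm_smul, Real.norm_of_nonneg ht.1,
          Real.mul_rpow ht.1 (norm_nonneg d), Real.rpow_add' (norm_nonneg d) hν', Real.rpow_one]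
        ring
  have := image_le_of_deriv_right_le_deriv_boundary
    (fun t ht => (hφ t ht).continuousAt.continuousWithinAt)
    (fun t ht => (hφ t (Set.Ico_subset_Icc_self ht)).hasDerivWithinAt)
    (by simp [Real.zero_rpow hν'])
    (fun t _ => (hB t).continuousAt.continuousWithinAt)
    (fun t _ => (hB t).hasDerivWithinAt)
    hbound (Set.right_mem_Icc.2 zero_le_one)
  simpa [d] using this

theorem le_add_inner_add_rpow_of_holder {E : Type*} [NormedAddCommGroup E]
    [InnerProductSpace ℝ E] [CompleteSpace E] {f : E → ℝ} {g : E → E} {x y : E} {H ν : ℝ}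
    (hν : 0 ≤ ν) (hf : ∀ z ∈ segment ℝ x y, HasGradientAt f (g z) z)
    (hg : ∀ z ∈ segment ℝ x y, ‖g z - g x‖ ≤ H * ‖z - x‖ ^ ν) :
    f y ≤ f x + ⟪g x, y - x⟫ + H / (1 + ν) * ‖y - x‖ ^ (1 + ν) :=
  le_add_fderiv_add_rpow_of_holder (f' := fun z => InnerProductSpace.toDual ℝ E (g z)) hν
    (fun z hz => (hf z hz).hasFDerivAt)
    (fun z hz => by rw [← map_sub, LinearIsometryEquiv.norm_map]; exact hg z hz)

theorem rpow_one_add_le_mul_sq_add {ν s : ℝ} (hν0 : 0 ≤ ν) (hν1 : ν ≤ 1) (hs : 0 ≤ s) :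
    s ^ (1 + ν) ≤ (1 + ν) / 2 * s ^ 2 + (1 - ν) / 2 := by
  have h := Real.geom_mean_le_arith_mean2_weighted (p₂ := 1) (by linarith : 0 ≤ (1 + ν) / 2)
    (by linarith : 0 ≤ (1 - ν) / 2) (sq_nonneg s) zero_le_one (by ring)
  have hpow : (s ^ 2) ^ ((1 + ν) / 2) = s ^ (1 + ν) := by
    rw [← Real.rpow_two, ← Real.rpow_mul hs]; ring_nf
  rwa [Real.one_rpow, mul_one, mul_one, hpow] at h

theorem mul_sq_le_of_mul_sq_le_one_add_rpow {H ν s : ℝ} (hH : 0 < H) (hν0 : 0 ≤ ν)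
    (hν1 : ν ≤ 1) (hs : 0 ≤ s) (h : H * s ^ 2 ≤ 1 + H / (1 + ν) * s ^ (1 + ν)) :
    (H * s) ^ 2 ≤ 2 * H * (1 + H) := by
  have hsmall : H / (1 + ν) * s ^ (1 + ν) ≤ H / 2 * s ^ 2 + H / 2 :=
    calc H / (1 + ν) * s ^ (1 + ν) ≤ H / (1 + ν) * ((1 + ν) / 2 * s ^ 2 + (1 - ν) / 2) := by
          gcongr; exact rpow_one_add_le_mul_sq_add hν0 hν1 hs
      _ = H / 2 * s ^ 2 + H / 2 - H * ν / (1 + ν) := by field_simp; ring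
      _ ≤ H / 2 * s ^ 2 + H / 2 := by
          have : 0 ≤ H * ν / (1 + ν) := by positivity
          linarith
  nlinarith

theorem mul_rpow_add_mul_le_of_sq_le {H s M ν : ℝ} (hH : 0 < H) (hs : 0 ≤ s) (hν : 0 ≤ ν)
    (h : (H * s) ^ 2 ≤ M) :
    H * s ^ ν + H * s ≤ H ^ (1 - ν) * M ^ (ν / 2) + M ^ ((1 : ℝ) / 2) := by
  have hle : ∀ p : ℝ, 0 ≤ p → (H * s) ^ p ≤ M ^ (p / 2) := fun p hp => by
    calc (H * s) ^ p = ((H * s) ^ 2) ^ (p / 2) := by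
          rw [← Real.rpow_two, ← Real.rpow_mul (by positivity)]; ring_nf
      _ ≤ M ^ (p / 2) := by gcongr
  have hsν : H * s ^ ν = H ^ (1 - ν) * (H * s) ^ ν := by
    rw [Real.mul_rpow hH.le hs, ← mul_assoc, ← Real.rpow_add hH, sub_add_cancel, Real.rpow_one]
  rw [hsν]
  gcongr
  · exact hle ν hν
  · simpa using hle 1 zero_le_one

theorem holder_step_residual_le {H ν ε r : ℝ} (hH : 0 < H) (hν0 : 0 ≤ ν) (hν1 : ν ≤ 1)
    (hε : 0 < ε) (hr : 0 ≤ r)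
    (h : H * ε ^ ((ν - 1) / (1 + ν)) * r ^ 2 ≤ ε + H / (1 + ν) * r ^ (1 + ν)) :
    H * r ^ ν + H * ε ^ ((ν - 1) / (1 + ν)) * r ≤
      (H ^ (1 - ν) * (2 * H * (1 + H)) ^ (ν / 2) + (2 * H * (1 + H)) ^ ((1 : ℝ) / 2)) *
        ε ^ (ν / (1 + ν)) := by
  set e := ε ^ (1 / (1 + ν)) with he
  have he0 : 0 < e := by positivity
  have hpow : ∀ p, ε ^ (p / (1 + ν)) = e ^ p := fun p => by
    rw [he, ← Real.rpow_mul hε.le]; ring_nf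
  have hεe : ε = e ^ (1 + ν) := by
    rw [← hpow, div_self (by linarith), Real.rpow_one]
  obtain ⟨s, hs, rfl⟩ : ∃ s, 0 ≤ s ∧ r = s * e := ⟨r / e, by positivity, by field_simp⟩
  rw [hpow, hpow]
  rw [hpow, hεe] at h
  have hscaled : H * s ^ 2 ≤ 1 + H / (1 + ν) * s ^ (1 + ν) := by
    have hee : e ^ (ν - 1) * e ^ 2 = e ^ (1 + ν) := by
      rw [← Real.rpow_two, ← Real.rpow_add he0]; ring_nf
    refine le_of_mul_le_mul_right ?_ (by positivity : 0 < e ^ (1 + ν))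
    calc H * s ^ 2 * e ^ (1 + ν) = H * e ^ (ν - 1) * (s * e) ^ 2 := by rw [← hee]; ring
      _ ≤ e ^ (1 + ν) + H / (1 + ν) * (s * e) ^ (1 + ν) := h
      _ = (1 + H / (1 + ν) * s ^ (1 + ν)) * e ^ (1 + ν) := by
          rw [Real.mul_rpow hs he0.le]; ring
  have hres := mul_rpow_add_mul_le_of_sq_le hH hs hν0
    (mul_sq_le_of_mul_sq_le_one_add_rpow hH hν0 hν1 hs hscaled)
  calc H * (s * e) ^ ν + H * e ^ (ν - 1) * (s * e) = (H * s ^ ν + H * s) * e ^ ν := by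
        rw [Real.mul_rpow hs he0.le, Real.rpow_sub_one he0.ne']; field_simp
    _ ≤ _ := by gcongr

theorem stmt_14_general (n : ℕ) (X : Set (EuclideanSpace ℝ (Fin n)))
    (hXc : Convex ℝ X)
    (F : EuclideanSpace ℝ (Fin n) → ℝ) (g : EuclideanSpace ℝ (Fin n) → EuclideanSpace ℝ (Fin n))
    (HF ν ε : ℝ) (hHF : 0 < HF) (hν : ν ∈ Set.Ioc (0 : ℝ) 1) (hε : 0 < ε)
    (hgrad : ∀ x ∈ X, HasGradientAt F (g x) x)
    (hhold : ∀ x ∈ X, ∀ x' ∈ X, ‖g x' - g x‖ ≤ HF * ‖x' - x‖ ^ ν)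
    (xstar : EuclideanSpace ℝ (Fin n))
    (hxstarmin : ∀ u ∈ X, F xstar ≤ F u)
    (γ : ℝ) (hγ : γ = (1 / HF) * ε ^ ((1 - ν) / (1 + ν)))
    (x xp : EuclideanSpace ℝ (Fin n)) (hx : x ∈ X) (hxp : xp ∈ X)
    (hsub : F x - F xstar ≤ ε)
    (hmin : ∀ u ∈ X,
      ⟪g x, xp - x⟫ + (1 / (2 * γ)) * ‖xp - x‖ ^ 2 ≤
        ⟪g x, u - x⟫ + (1 / (2 * γ)) * ‖u - x‖ ^ 2) :
    Metric.infDist (-(g xp)) {v | ∀ y ∈ X, ⟪v, y - xp⟫ ≤ 0} ≤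
      (HF ^ (1 - ν) * (2 * HF * (1 + HF)) ^ (ν / 2) + (2 * HF * (1 + HF)) ^ ((1 : ℝ) / 2))
        * ε ^ (ν / (1 + ν)) := by
  obtain ⟨hν0, hν1⟩ := hν
  have hγinv : γ⁻¹ = HF * ε ^ ((ν - 1) / (1 + ν)) := by
    rw [hγ, mul_inv, one_div, inv_inv, ← Real.rpow_neg hε.le]
    ring_nf
  have hN := neg_add_inv_smul_sub_mem_normalCone hXc hxp hmin
  have hseg := hXc.segment_subset hx hxp
  have hdesc := le_add_inner_add_rpow_of_holder hν0.le (fun z hz => hgrad z (hseg hz))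
    (fun z hz => hhold x hx z (hseg hz))
  have hdecrease : ⟪g x, xp - x⟫ ≤ -(γ⁻¹ * ‖xp - x‖ ^ 2) := by
    have h := hN x hx
    rw [inner_neg_left, inner_add_left, real_inner_smul_left, ← neg_sub xp x, inner_neg_right,
      inner_neg_right, real_inner_self_eq_norm_sq] at h
    linarith
  have hstep : HF * ε ^ ((ν - 1) / (1 + ν)) * ‖xp - x‖ ^ 2 ≤
      ε + HF / (1 + ν) * ‖xp - x‖ ^ (1 + ν) := by
    rw [← hγinv]
    linarith [hxstarmin xp hxp]
  calc Metric.infDist (-(g xp)) {v | ∀ y ∈ X, ⟪v, y - xp⟫ ≤ 0}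
      ≤ ‖g xp - g x‖ + γ⁻¹ * ‖xp - x‖ :=
        infDist_neg_le_of_mem_normalCone (by rw [hγ]; positivity) hN
    _ ≤ HF * ‖xp - x‖ ^ ν + HF * ε ^ ((ν - 1) / (1 + ν)) * ‖xp - x‖ := by
      rw [hγinv]; gcongr; exact hhold x hx xp hxp
    _ ≤ _ := holder_step_residual_le hHF hν0.le hν1 hε (norm_nonneg _) hstep

/-- Stationarity of the projected-gradient step: under `(H_F, ν)`-Hölder smoothness, if
`F(x) - F(x*) ≤ ε` for the minimizer `x*` of `F` over `X`, then for
`γ = (1/H_F) ε^{(1-ν)/(1+ν)}` and `x⁺` the proximal step,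
`dist(-∇F(x⁺), N_X(x⁺)) ≤ (H_F^{1-ν}(2H_F(1+H_F))^{ν/2} + (2H_F(1+H_F))^{1/2}) ε^{ν/(1+ν)}`. -/
theorem stmt_14 (n : ℕ) (X : Set (EuclideanSpace ℝ (Fin n)))
    (hXc : Convex ℝ X) (hXcl : IsClosed X)
    (F : EuclideanSpace ℝ (Fin n) → ℝ) (g : EuclideanSpace ℝ (Fin n) → EuclideanSpace ℝ (Fin n))
    (HF ν ε : ℝ) (hHF : 0 < HF) (hν : ν ∈ Set.Ioc (0 : ℝ) 1) (hε : 0 < ε)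
    (hgrad : ∀ x ∈ X, HasGradientAt F (g x) x)
    (hhold : ∀ x ∈ X, ∀ x' ∈ X, ‖g x' - g x‖ ≤ HF * ‖x' - x‖ ^ ν)
    (xstar : EuclideanSpace ℝ (Fin n)) (hxstar : xstar ∈ X)
    (hxstarmin : ∀ u ∈ X, F xstar ≤ F u)
    (γ : ℝ) (hγ : γ = (1 / HF) * ε ^ ((1 - ν) / (1 + ν)))
    (x xp : EuclideanSpace ℝ (Fin n)) (hx : x ∈ X) (hxp : xp ∈ X)
    (hsub : F x - F xstar ≤ ε)
    (hmin : ∀ u ∈ X,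
      ⟪g x, xp - x⟫ + (1 / (2 * γ)) * ‖xp - x‖ ^ 2 ≤
        ⟪g x, u - x⟫ + (1 / (2 * γ)) * ‖u - x‖ ^ 2) :
    Metric.infDist (-(g xp)) {v | ∀ y ∈ X, ⟪v, y - xp⟫ ≤ 0} ≤
      (HF ^ (1 - ν) * (2 * HF * (1 + HF)) ^ (ν / 2) + (2 * HF * (1 + HF)) ^ ((1 : ℝ) / 2))
        * ε ^ (ν / (1 + ν)) :=
  stmt_14_general n X hXc F g HF ν ε hHF hν hε hgrad hhold xstar hxstarmin γ hγ x xp hx hxp hsub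
    hmin
end

section
/- Let v > 0, ν ∈ (0,1], β > 0, and suppose real numbers satisfy: dist(−g − Jᵀy − β‖a‖^{ν−1} Jᵀa, N) ≤ ε where a ∈ ℝ^m, g ∈ ℝ^n, J ∈ ℝ^{m×n}, y ∈ ℝ^m, N ⊆ ℝ^n is a cone containing 0, and the regularity condition dist(−Jᵀa, N) ≥ v‖a‖ holds. Then ‖a‖^ν ≤ (‖g‖ + ‖Jᵀy‖ + ε)/(vβ). -/
open scoped RealInnerProductSpace

/-- Key bound on the constraint violation: if `N ⊆ ℝ^n` is a cone containing `0`,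
the regularity condition `dist(-Jᵀa, N) ≥ v‖a‖` holds, and
`dist(-(g + Jᵀy + β‖a‖^{ν-1} Jᵀa), N) ≤ ε`, then
`‖a‖^ν ≤ (‖g‖ + ‖Jᵀy‖ + ε)/(vβ)`. -/
theorem stmt_19 (n m : ℕ) (v ν β ε : ℝ) (hv : 0 < v) (hν : ν ∈ Set.Ioc (0 : ℝ) 1)
    (hβ : 0 < β) (hε : 0 ≤ ε)
    (J : EuclideanSpace ℝ (Fin n) →L[ℝ] EuclideanSpace ℝ (Fin m))
    (a y : EuclideanSpace ℝ (Fin m)) (g : EuclideanSpace ℝ (Fin n))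
    (N : Set (EuclideanSpace ℝ (Fin n))) (h0 : (0 : EuclideanSpace ℝ (Fin n)) ∈ N)
    (hcone : ∀ z ∈ N, ∀ c : ℝ, 0 ≤ c → c • z ∈ N)
    (hreg : Metric.infDist (-(ContinuousLinearMap.adjoint J a)) N ≥ v * ‖a‖)
    (hstat : Metric.infDist
        (-(g + ContinuousLinearMap.adjoint J y
            + (β * ‖a‖ ^ (ν - 1)) • ContinuousLinearMap.adjoint J a)) N ≤ ε) :
    ‖a‖ ^ ν ≤ (‖g‖ + ‖ContinuousLinearMap.adjoint J y‖ + ε) / (v * β) := by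
  obtain ⟨hν0, hν1⟩ := hν
  set w := ContinuousLinearMap.adjoint J a with hw
  set u := ContinuousLinearMap.adjoint J y with hu
  have hvβ : 0 < v * β := mul_pos hv hβ
  have hnum : 0 ≤ ‖g‖ + ‖u‖ + ε := by positivity
  rcases eq_or_ne a 0 with ha | ha
  · rw [ha, norm_zero, Real.zero_rpow hν0.ne']
    positivity
  · have hna : (0:ℝ) < ‖a‖ := norm_pos_iff.mpr ha
    set t : ℝ := β * ‖a‖ ^ (ν - 1) with ht
    have htpos : 0 < t := by
      have := Real.rpow_pos_of_pos hna (ν - 1)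
      positivity
    -- lower bound: t * (v * ‖a‖) ≤ infDist (-(t • w)) N
    have key : t * (v * ‖a‖) ≤ Metric.infDist (-(t • w)) N := by
      by_contra hlt
      push_neg at hlt
      obtain ⟨z, hzN, hz⟩ := (Metric.infDist_lt_iff ⟨0, h0⟩).mp hlt
      have hz' : ‖-(t • w) - z‖ < t * (v * ‖a‖) := by rwa [dist_eq_norm] at hz
      have hmem : t⁻¹ • z ∈ N := hcone z hzN _ (by positivity)
      have : Metric.infDist (-w) N ≤ dist (-w) (t⁻¹ • z) :=
        Metric.infDist_le_dist_of_mem hmem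
      have hscale : dist (-w) (t⁻¹ • z) = t⁻¹ * ‖-(t • w) - z‖ := by
        rw [dist_eq_norm]
        rw [show -w - t⁻¹ • z = t⁻¹ • (-(t • w) - z) by
          rw [smul_sub, smul_neg, smul_smul, inv_mul_cancel₀ htpos.ne', one_smul]]
        rw [norm_smul, Real.norm_eq_abs, abs_of_pos (inv_pos.mpr htpos)]
      have hlt2 : Metric.infDist (-w) N < v * ‖a‖ := by
        calc Metric.infDist (-w) N ≤ t⁻¹ * ‖-(t • w) - z‖ := by rw [← hscale]; exact this
          _ < t⁻¹ * (t * (v * ‖a‖)) := by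
              exact mul_lt_mul_of_pos_left hz' (inv_pos.mpr htpos)
          _ = v * ‖a‖ := by field_simp
      exact absurd hreg (not_le.mpr hlt2)
    -- upper bound via triangle inequality
    have upper : Metric.infDist (-(t • w)) N ≤ ε + (‖g‖ + ‖u‖) := by
      calc Metric.infDist (-(t • w)) N
          ≤ Metric.infDist (-(g + u + t • w)) N + dist (-(t • w)) (-(g + u + t • w)) :=
            Metric.infDist_le_infDist_add_dist
        _ ≤ ε + (‖g‖ + ‖u‖) := by
            refine add_le_add hstat ?_
            rw [dist_eq_norm]
            have : -(t • w) - -(g + u + t • w) = g + u := by abel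
            rw [this]
            exact norm_add_le _ _
    have hchain : t * (v * ‖a‖) ≤ ε + (‖g‖ + ‖u‖) := key.trans upper
    have hrw : t * (v * ‖a‖) = v * β * ‖a‖ ^ ν := by
      have hs : ‖a‖ ^ (ν - 1) = ‖a‖ ^ ν / ‖a‖ := by
        rw [Real.rpow_sub hna, Real.rpow_one]
      rw [ht, hs]
      field_simp
    rw [hrw] at hchain
    rw [le_div_iff₀ hvβ]
    linarith
end
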